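/- Let Γ be a finite set containing two distinct points a and b, and let λ : Γ → [0, ∞) satisfy λ(a) = λ(b). Let Ψ be a random element of ℤ≥0^Γ with E[Σ_{α∈Γ} Ψ(α)] < ∞ satisfying E[B_0 g(Ψ)] = 0 for every bounded function g : ℤ≥0^Γ → ℝ, and suppose P[Ψ = δ_a] = P[Ψ = δ_b]. Write |Ψ| = Σ_{α∈Γ} Ψ(α) and |λ| = Σ_{α∈Γ} λ(α). Then for every bounded function f : ℤ≥0 → ℝ, E[ |λ| (f(|Ψ|+1) − f(|Ψ|)) + |Ψ| (f(|Ψ|−1) − f(|Ψ|)) ] = −P[Ψ = δ_a] · (f(2) − 2 f(1) + f(0)). -/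

import Mathlib

/-!
Apply the Stein identity for `B_0` to the bounded function `g = f ∘ |·|`. Every birth raises
and every death lowers the total count by one, so the unperturbed part `A g(Ψ)` is the
Poisson(`|λ|`) Stein operator of `f` at `|Ψ|`. The perturbations act only at `δ_a` and `δ_b`,
where each contributes half of `f 2 - 2 f 1 + f 0`; by `P[Ψ = δ_a] = P[Ψ = δ_b]` their
expectation is `P[Ψ = δ_a] (f 2 - 2 f 1 + f 0)`.
-/


open MeasureTheory

/-- The configuration with exactly one point at `a`. -/
def deltaAt {Γ : Type*} [DecidableEq Γ] (a : Γ) : Γ → ℕ := fun x => if x = a then 1 else 0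

/-- The Poisson point process Stein operator
`A g(ξ) = Σ_α λ(α)[g(ξ+δ_α) − g(ξ)] + Σ_α ξ(α)[g(ξ−δ_α) − g(ξ)]`. -/
noncomputable def ppSteinA {Γ : Type*} [Fintype Γ] [DecidableEq Γ] (lam : Γ → ℝ)
    (g : (Γ → ℕ) → ℝ) (ξ : Γ → ℕ) : ℝ :=
  (∑ α, lam α * (g (ξ + deltaAt α) - g ξ)) + ∑ α, (ξ α : ℝ) * (g (ξ - deltaAt α) - g ξ)

/-- The perturbed Poisson point process Stein operator `B_0`, perturbed at the
configurations `δ_a` and `δ_b`. -/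
noncomputable def ppSteinB {Γ : Type*} [Fintype Γ] [DecidableEq Γ] (lam : Γ → ℝ) (a b : Γ)
    (g : (Γ → ℕ) → ℝ) (ξ : Γ → ℕ) : ℝ :=
  ppSteinA lam g ξ
    + (1 / 2) * (if ξ = deltaAt a then (1 : ℝ) else 0) * (g (ξ + deltaAt b) - g ξ)
    + (1 / 2) * (if ξ = deltaAt b then (1 : ℝ) else 0) * (g (ξ + deltaAt a) - g ξ)
    + (1 / 2) * (if ξ = deltaAt a then (1 : ℝ) else 0) * (g (ξ - deltaAt a) - g ξ)
    + (1 / 2) * (if ξ = deltaAt b then (1 : ℝ) else 0) * (g (ξ - deltaAt b) - g ξ)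

/-- The Stein–Chen operator of the Poisson distribution with mean `μ`; the truncated `n - 1` at
`n = 0` is harmless, being multiplied by `n`. -/
noncomputable def poissonStein (μ : ℝ) (f : ℕ → ℝ) (n : ℕ) : ℝ :=
  μ * (f (n + 1) - f n) + n * (f (n - 1) - f n)

lemma abs_poissonStein_le {μ C : ℝ} {f : ℕ → ℝ} (hC : ∀ n, |f n| ≤ C) (n : ℕ) :
    |poissonStein μ f n| ≤ 2 * C * (|μ| + n) := by
  have hdiff : ∀ m k, |f m - f k| ≤ 2 * C := fun m k => by
    linarith [abs_sub (f m) (f k), hC m, hC k]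
  calc |poissonStein μ f n|
      ≤ |μ| * |f (n + 1) - f n| + n * |f (n - 1) - f n| := by
        unfold poissonStein
        simpa only [abs_mul, Nat.abs_cast] using
          abs_add_le (μ * (f (n + 1) - f n)) ((n : ℝ) * (f (n - 1) - f n))
    _ ≤ |μ| * (2 * C) + n * (2 * C) := by gcongr <;> apply hdiff
    _ = 2 * C * (|μ| + n) := by ring

section Configurations

variable {Γ : Type*} [Fintype Γ] [DecidableEq Γ]

lemma sum_deltaAt (a : Γ) : ∑ x, deltaAt a x = 1 := by
  simp [deltaAt]

lemma sum_add_deltaAt (ξ : Γ → ℕ) (a : Γ) : ∑ x, (ξ + deltaAt a) x = ∑ x, ξ x + 1 := by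
  simp [Finset.sum_add_distrib, sum_deltaAt]

lemma sum_sub_deltaAt {ξ : Γ → ℕ} {a : Γ} (h : 1 ≤ ξ a) :
    ∑ x, (ξ - deltaAt a) x = ∑ x, ξ x - 1 := by
  have hle : deltaAt a ≤ ξ := fun x => by
    unfold deltaAt
    split_ifs with hx
    · exact hx ▸ h
    · exact Nat.zero_le _
  have := sum_add_deltaAt (ξ - deltaAt a) a
  rw [tsub_add_cancel_of_le hle] at this
  omega

lemma ppSteinA_comp_sum (lam : Γ → ℝ) (f : ℕ → ℝ) (ξ : Γ → ℕ) :
    ppSteinA lam (fun η => f (∑ x, η x)) ξ =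
      poissonStein (∑ α, lam α) f (∑ x, ξ x) := by
  unfold ppSteinA poissonStein
  push_cast
  rw [Finset.sum_mul, Finset.sum_mul]
  congr 1
  · simp only [sum_add_deltaAt]
  · refine Finset.sum_congr rfl fun α _ => ?_
    rcases Nat.eq_zero_or_pos (ξ α) with hα | hα
    · simp [hα]
    · rw [sum_sub_deltaAt hα]

/-- At `ξ = δ_c` both perturbations of `B_0` move the total count `1` by one step, so on a
function of the total count each contributes half the second difference of `f` at `1`. -/
lemma ppSteinB_comp_sum (lam : Γ → ℝ) (a b : Γ) (f : ℕ → ℝ) (ξ : Γ → ℕ) :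
    ppSteinB lam a b (fun η => f (∑ x, η x)) ξ =
      poissonStein (∑ α, lam α) f (∑ x, ξ x) +
        ((if ξ = deltaAt a then 1 else 0) + (if ξ = deltaAt b then 1 else 0)) *
          ((f 2 - 2 * f 1 + f 0) / 2) := by
  have hc : ∀ c d : Γ, ξ = deltaAt c →
      f (∑ x, (ξ + deltaAt d) x) - f (∑ x, ξ x) +
          (f (∑ x, (ξ - deltaAt c) x) - f (∑ x, ξ x)) = f 2 - 2 * f 1 + f 0 := by
    rintro c d rfl
    rw [sum_add_deltaAt, sum_sub_deltaAt (by simp [deltaAt]), sum_deltaAt]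
    ring
  unfold ppSteinB
  rw [ppSteinA_comp_sum]
  beta_reduce
  split_ifs with ha hb hb
  · linarith [hc a b ha, hc b a hb]
  · linarith [hc a b ha]
  · linarith [hc b a hb]
  · ring

end Configurations

lemma ite_eq_one_eq_indicator {Ω E : Type*} [DecidableEq E] (X : Ω → E) (x : E) :
    (fun ω => if X ω = x then (1 : ℝ) else 0) = (X ⁻¹' {x}).indicator 1 := by
  funext ω
  by_cases h : X ω = x <;> simp [h]

section Integration

variable {Ω : Type*} [MeasurableSpace Ω] {P : Measure Ω}

lemma integrable_poissonStein_comp [IsFiniteMeasure P] {N : Ω → ℕ} (hN : Measurable N)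
    (hNint : Integrable (fun ω => (N ω : ℝ)) P) (μ : ℝ) {f : ℕ → ℝ} {C : ℝ}
    (hC : ∀ n, |f n| ≤ C) :
    Integrable (fun ω => poissonStein μ f (N ω)) P :=
  (((integrable_const |μ|).add hNint).const_mul (2 * C)).mono'
    ((measurable_of_countable (poissonStein μ f)).comp hN).aestronglyMeasurable
    (Filter.Eventually.of_forall fun ω => abs_poissonStein_le hC (N ω))

variable {E : Type*} [MeasurableSpace E] [MeasurableSingletonClass E] [DecidableEq E] {X : Ω → E}

lemma integrable_ite_eq_one [IsFiniteMeasure P] (hX : Measurable X) (x : E) :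
    Integrable (fun ω => if X ω = x then (1 : ℝ) else 0) P := by
  rw [ite_eq_one_eq_indicator]
  exact (integrable_const 1).indicator (hX (measurableSet_singleton x))

lemma integral_ite_eq_one (hX : Measurable X) (x : E) :
    ∫ ω, (if X ω = x then (1 : ℝ) else 0) ∂P = P.real {ω | X ω = x} := by
  rw [ite_eq_one_eq_indicator, integral_indicator_one (hX (measurableSet_singleton x))]
  rfl

end Integration

theorem pp_perturbed_total_count_identity_general
    {Ω : Type*} [MeasurableSpace Ω] (P : Measure Ω) [IsProbabilityMeasure P]
    {Γ : Type*} [Fintype Γ] [DecidableEq Γ] (a b : Γ)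
    (lam : Γ → ℝ)
    (Ψ : Ω → Γ → ℕ) (hΨ : Measurable Ψ)
    (hint : Integrable (fun ω => ∑ α, (Ψ ω α : ℝ)) P)
    (hstein : ∀ g : (Γ → ℕ) → ℝ, (∃ C : ℝ, ∀ ξ, |g ξ| ≤ C) →
      ∫ ω, ppSteinB lam a b g (Ψ ω) ∂P = 0)
    (hsym : P {ω | Ψ ω = deltaAt a} = P {ω | Ψ ω = deltaAt b}) :
    ∀ f : ℕ → ℝ, (∃ C : ℝ, ∀ n, |f n| ≤ C) →
      ∫ ω, ((∑ α, lam α) * (f ((∑ α, Ψ ω α) + 1) - f (∑ α, Ψ ω α)) +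
          (∑ α, (Ψ ω α : ℝ)) * (f ((∑ α, Ψ ω α) - 1) - f (∑ α, Ψ ω α))) ∂P =
        -(P {ω | Ψ ω = deltaAt a}).toReal * (f 2 - 2 * f 1 + f 0) := by
  rintro f ⟨C, hC⟩
  have hN : Measurable fun ω => ∑ α, Ψ ω α :=
    (measurable_of_countable fun ξ : Γ → ℕ => ∑ α, ξ α).comp hΨ
  have hNint : Integrable (fun ω => ((∑ α, Ψ ω α : ℕ) : ℝ)) P := by
    simpa only [Nat.cast_sum] using hint
  have hsteinf := hstein (fun η => f (∑ x, η x)) ⟨C, fun _ => hC _⟩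
  simp only [ppSteinB_comp_sum] at hsteinf
  rw [integral_add (integrable_poissonStein_comp hN hNint _ hC)
      (((integrable_ite_eq_one hΨ _).fun_add (integrable_ite_eq_one hΨ _)).mul_const _),
    integral_mul_const, integral_add (integrable_ite_eq_one hΨ _) (integrable_ite_eq_one hΨ _),
    integral_ite_eq_one hΨ, integral_ite_eq_one hΨ, measureReal_def, measureReal_def,
    ← hsym] at hsteinf
  simp only [poissonStein, Nat.cast_sum] at hsteinf
  linarith

/-- In the setting of the perturbed Poisson point process, the total number
of points `|Ψ| = Σ_α Ψ(α)` satisfies, for every bounded `f : ℕ → ℝ`,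
`E[|λ|(f(|Ψ|+1) − f(|Ψ|)) + |Ψ|(f(|Ψ|−1) − f(|Ψ|))] = −P[Ψ = δ_a](f(2) − 2f(1) + f(0))`. -/
theorem pp_perturbed_total_count_identity
    {Ω : Type*} [MeasurableSpace Ω] (P : Measure Ω) [IsProbabilityMeasure P]
    {Γ : Type*} [Fintype Γ] [DecidableEq Γ] (a b : Γ) (hab : a ≠ b)
    (lam : Γ → ℝ) (hlam : ∀ α, 0 ≤ lam α) (hlamab : lam a = lam b)
    (Ψ : Ω → Γ → ℕ) (hΨ : Measurable Ψ)
    (hint : Integrable (fun ω => ∑ α, (Ψ ω α : ℝ)) P)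
    (hstein : ∀ g : (Γ → ℕ) → ℝ, (∃ C : ℝ, ∀ ξ, |g ξ| ≤ C) →
      ∫ ω, ppSteinB lam a b g (Ψ ω) ∂P = 0)
    (hsym : P {ω | Ψ ω = deltaAt a} = P {ω | Ψ ω = deltaAt b}) :
    ∀ f : ℕ → ℝ, (∃ C : ℝ, ∀ n, |f n| ≤ C) →
      ∫ ω, ((∑ α, lam α) * (f ((∑ α, Ψ ω α) + 1) - f (∑ α, Ψ ω α)) +
          (∑ α, (Ψ ω α : ℝ)) * (f ((∑ α, Ψ ω α) - 1) - f (∑ α, Ψ ω α))) ∂P =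
        -(P {ω | Ψ ω = deltaAt a}).toReal * (f 2 - 2 * f 1 + f 0) :=
  pp_perturbed_total_count_identity_general P a b lam Ψ hΨ hint hstein hsym
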